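/- arXiv:1802.03905 — 4 statements merged into one kernel-verified Lean document; each statement's English description precedes it below -/
import Mathlib

section
/- Define f(x) = min over θ ∈ [0,1] of (∫₀^θ e^{y-1} dy + min{1 - e^{θ-1}, e^{x-1}}). Then for all x ∈ [0,1], f(x) ≥ min{e^{x-1}, 1 - 1/e}. -/
open Real

theorem stmt_1 (x : ℝ) (hx : x ∈ Set.Icc (0:ℝ) 1) :
    (⨅ θ : Set.Icc (0:ℝ) 1,
        ((∫ y in (0:ℝ)..(θ : ℝ), Real.exp (y - 1)) +
          min (1 - Real.exp ((θ : ℝ) - 1)) (Real.exp (x - 1))))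
      ≥ min (Real.exp (x - 1)) (1 - 1 / Real.exp 1) := by
  rw [ge_iff_le]
  apply le_ciInf
  intro θ
  have hθ := θ.2
  have hint : (∫ y in (0:ℝ)..(θ : ℝ), Real.exp (y - 1))
      = Real.exp ((θ:ℝ) - 1) - Real.exp (0 - 1) := by
    have := intervalIntegral.integral_comp_sub_right (a := 0) (b := (θ:ℝ))
      (fun y => Real.exp y) 1
    simpa [integral_exp] using this
  rw [hint]
  rcases le_total (1 - Real.exp ((θ:ℝ) - 1)) (Real.exp (x - 1)) with h | h
  · rw [min_eq_left h]
    have : Real.exp ((θ:ℝ) - 1) - Real.exp (0 - 1) + (1 - Real.exp ((θ:ℝ) - 1))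
        = 1 - 1 / Real.exp 1 := by
      rw [zero_sub, Real.exp_neg, one_div]
      ring
    rw [this]
    exact min_le_right _ _
  · rw [min_eq_right h]
    have h1 : Real.exp (0 - 1) ≤ Real.exp ((θ:ℝ) - 1) :=
      Real.exp_le_exp.2 (by linarith [hθ.1])
    calc min (Real.exp (x - 1)) (1 - 1 / Real.exp 1) ≤ Real.exp (x - 1) :=
          min_le_left _ _
      _ ≤ _ := by linarith
end

section
/- With g(x) = e^{x-1}, the integral ∫₀¹ min{g(x), 1 - 1/e} dx equals (e-2)/e + (1 - ln(e-1))(1 - 1/e), which is strictly greater than 0.5541. -/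
open Real

theorem stmt_2 :
    (∫ x in (0:ℝ)..1, min (Real.exp (x - 1)) (1 - 1 / Real.exp 1))
      = (Real.exp 1 - 2) / Real.exp 1 +
        (1 - Real.log (Real.exp 1 - 1)) * (1 - 1 / Real.exp 1) ∧
    (Real.exp 1 - 2) / Real.exp 1 +
        (1 - Real.log (Real.exp 1 - 1)) * (1 - 1 / Real.exp 1) > 0.5541 := by
  have he : (0:ℝ) < Real.exp 1 := Real.exp_pos 1
  have he1 : (1:ℝ) < Real.exp 1 - 1 := by
    have := Real.exp_one_gt_d9; linarith
  set θ := Real.log (Real.exp 1 - 1) with hθdef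
  have hθ0 : 0 ≤ θ := Real.log_nonneg (by linarith)
  have hθ1 : θ ≤ 1 := by
    rw [hθdef, Real.log_le_iff_le_exp (by linarith)]
    linarith
  have hexpθ : Real.exp θ = Real.exp 1 - 1 := Real.exp_log (by linarith)
  have hexpθ1 : Real.exp (θ - 1) = 1 - 1 / Real.exp 1 := by
    rw [Real.exp_sub, hexpθ]
    field_simp
  have hcont : Continuous fun x : ℝ => min (Real.exp (x - 1)) (1 - 1 / Real.exp 1) :=
    Continuous.min (by continuity) continuous_const
  have hsplit :
      (∫ x in (0:ℝ)..θ, min (Real.exp (x - 1)) (1 - 1 / Real.exp 1)) +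
        (∫ x in θ..1, min (Real.exp (x - 1)) (1 - 1 / Real.exp 1)) =
      ∫ x in (0:ℝ)..1, min (Real.exp (x - 1)) (1 - 1 / Real.exp 1) :=
    intervalIntegral.integral_add_adjacent_intervals
      (hcont.intervalIntegrable _ _) (hcont.intervalIntegrable _ _)
  have h1 : (∫ x in (0:ℝ)..θ, min (Real.exp (x - 1)) (1 - 1 / Real.exp 1)) =
      (Real.exp 1 - 2) / Real.exp 1 := by
    have hcongr : (∫ x in (0:ℝ)..θ, min (Real.exp (x - 1)) (1 - 1 / Real.exp 1)) =
        ∫ x in (0:ℝ)..θ, Real.exp (x - 1) := by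
      apply intervalIntegral.integral_congr
      intro x hx
      rw [Set.uIcc_of_le hθ0] at hx
      have : Real.exp (x - 1) ≤ 1 - 1 / Real.exp 1 := by
        rw [← hexpθ1]
        exact Real.exp_le_exp.2 (by linarith [hx.2])
      exact min_eq_left this
    rw [hcongr]
    rw [intervalIntegral.integral_comp_sub_right (fun x => Real.exp x) 1, integral_exp, hexpθ1]
    have : Real.exp ((0:ℝ) - 1) = 1 / Real.exp 1 := by
      rw [Real.exp_sub]; simp
    rw [this]
    field_simp
    ring
  have h2 : (∫ x in θ..1, min (Real.exp (x - 1)) (1 - 1 / Real.exp 1)) =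
      (1 - θ) * (1 - 1 / Real.exp 1) := by
    have hcongr : (∫ x in θ..1, min (Real.exp (x - 1)) (1 - 1 / Real.exp 1)) =
        ∫ x in θ..1, (1 - 1 / Real.exp 1) := by
      apply intervalIntegral.integral_congr
      intro x hx
      rw [Set.uIcc_of_le hθ1] at hx
      have : 1 - 1 / Real.exp 1 ≤ Real.exp (x - 1) := by
        rw [← hexpθ1]
        exact Real.exp_le_exp.2 (by linarith [hx.1])
      exact min_eq_right this
    rw [hcongr, intervalIntegral.integral_const, smul_eq_mul]
  constructor
  · rw [← hsplit, h1, h2]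
  · -- numeric bound
    have hθub : θ < 0.5414 := by
      rw [hθdef, Real.log_lt_iff_lt_exp (by linarith)]
      have hsum : (∑ i ∈ Finset.range 6, (0.5414:ℝ) ^ i / (Nat.factorial i)) ≤ Real.exp 0.5414 :=
        Real.sum_le_exp_of_nonneg (by norm_num) 6
      have hval : (1.71837:ℝ) ≤ ∑ i ∈ Finset.range 6, (0.5414:ℝ) ^ i / (Nat.factorial i) := by
        simp only [Finset.sum_range_succ, Finset.sum_range_zero]
        norm_num [Nat.factorial]
      have := Real.exp_one_lt_d9
      linarith
    have helo : (2.7182818283:ℝ) < Real.exp 1 := Real.exp_one_gt_d9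
    have h1e : 1 / Real.exp 1 < 1 / 2.7182818283 :=
      one_div_lt_one_div_of_lt (by norm_num) helo
    have hfac : 0.4586 * (1 - 1 / Real.exp 1) < (1 - θ) * (1 - 1 / Real.exp 1) := by
      apply mul_lt_mul_of_pos_right (by linarith)
      nlinarith
    have h2e : (Real.exp 1 - 2) / Real.exp 1 = 1 - 2 / Real.exp 1 := by
      field_simp
    rw [h2e]
    have h2e' : 2 / Real.exp 1 < 2 / 2.7182818283 := by
      apply div_lt_div_of_pos_left (by norm_num) (by norm_num) helo
    nlinarith
end

section
/- Let f(x) = min over θ∈[0,1] of (∫₀^θ e^{y-1} dy + min{1-e^{θ-1}, e^{x-1}}). Then ∫₀¹ f(x) dx ≥ (e-2)/e + (1 - ln(e-1))(1 - 1/e) > 0.5541. -/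
open Real

lemma exp_sub_one_int (t : ℝ) :
    (∫ y in (0:ℝ)..t, Real.exp (y - 1)) = Real.exp (t - 1) - Real.exp (-1) := by
  have := intervalIntegral.integral_comp_sub_right (a := (0:ℝ)) (b := t) Real.exp 1
  rw [this, integral_exp]
  norm_num

lemma inf_eq (x : ℝ) :
    (⨅ θ : Set.Icc (0:ℝ) 1,
        ((∫ y in (0:ℝ)..(θ : ℝ), Real.exp (y - 1)) +
          min (1 - Real.exp ((θ : ℝ) - 1)) (Real.exp (x - 1))))
      = min (Real.exp (x - 1)) (1 - Real.exp (-1)) := by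
  haveI : Nonempty (Set.Icc (0:ℝ) 1) := ⟨⟨0, by norm_num⟩⟩
  have key : ∀ θ : Set.Icc (0:ℝ) 1,
      min (Real.exp (x - 1)) (1 - Real.exp (-1)) ≤
        ((∫ y in (0:ℝ)..(θ : ℝ), Real.exp (y - 1)) +
          min (1 - Real.exp ((θ : ℝ) - 1)) (Real.exp (x - 1))) := by
    intro ⟨θ, h0, h1⟩
    simp only [exp_sub_one_int]
    have he : Real.exp (-1) ≤ Real.exp (θ - 1) := Real.exp_le_exp.2 (by linarith)
    rcases le_total (1 - Real.exp (θ - 1)) (Real.exp (x - 1)) with h | h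
    · rw [min_eq_left h]
      have : min (Real.exp (x - 1)) (1 - Real.exp (-1)) ≤ 1 - Real.exp (-1) := min_le_right _ _
      linarith
    · rw [min_eq_right h]
      have : min (Real.exp (x - 1)) (1 - Real.exp (-1)) ≤ Real.exp (x - 1) := min_le_left _ _
      linarith
  have hbdd : BddBelow (Set.range fun θ : Set.Icc (0:ℝ) 1 =>
      ((∫ y in (0:ℝ)..(θ : ℝ), Real.exp (y - 1)) +
        min (1 - Real.exp ((θ : ℝ) - 1)) (Real.exp (x - 1)))) :=
    ⟨min (Real.exp (x - 1)) (1 - Real.exp (-1)), by rintro _ ⟨θ, rfl⟩; exact key θ⟩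
  refine le_antisymm ?_ (le_ciInf key)
  rcases le_total (Real.exp (x - 1)) (1 - Real.exp (-1)) with h | h
  · rw [min_eq_left h]
    refine (ciInf_le hbdd (⟨0, by norm_num⟩ : Set.Icc (0:ℝ) 1)).trans ?_
    simp only [exp_sub_one_int]
    rw [show ((⟨0, by norm_num⟩ : Set.Icc (0:ℝ) 1) : ℝ) - 1 = -1 from by norm_num,
      min_eq_right h]
    linarith
  · rw [min_eq_right h]
    refine (ciInf_le hbdd (⟨1, by norm_num⟩ : Set.Icc (0:ℝ) 1)).trans ?_
    simp only [exp_sub_one_int]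
    rw [show ((⟨1, by norm_num⟩ : Set.Icc (0:ℝ) 1) : ℝ) - 1 = 0 from by norm_num,
      Real.exp_zero, sub_self, min_eq_left (Real.exp_nonneg _)]
    linarith

lemma log_bound : Real.log (Real.exp 1 - 1) ≤ 0.5414 := by
  have h1 : Real.exp 1 < 2.7182818286 := Real.exp_one_lt_d9
  have h2 : (0:ℝ) < Real.exp 1 - 1 := by
    have := Real.exp_one_gt_d9; linarith
  rw [Real.log_le_iff_le_exp h2]
  have h3 : (∑ i ∈ Finset.range 6, (0.5414:ℝ) ^ i / i.factorial) ≤ Real.exp 0.5414 :=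
    Real.sum_le_exp_of_nonneg (by norm_num) 6
  have h4 : (1.71837:ℝ) ≤ ∑ i ∈ Finset.range 6, (0.5414:ℝ) ^ i / i.factorial := by
    norm_num [Finset.sum_range_succ, Nat.factorial]
  linarith

theorem stmt_3 :
    (∫ x in (0:ℝ)..1,
        ⨅ θ : Set.Icc (0:ℝ) 1,
          ((∫ y in (0:ℝ)..(θ : ℝ), Real.exp (y - 1)) +
            min (1 - Real.exp ((θ : ℝ) - 1)) (Real.exp (x - 1))))
      ≥ (Real.exp 1 - 2) / Real.exp 1 +
          (1 - Real.log (Real.exp 1 - 1)) * (1 - 1 / Real.exp 1) ∧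
    (Real.exp 1 - 2) / Real.exp 1 +
        (1 - Real.log (Real.exp 1 - 1)) * (1 - 1 / Real.exp 1) > 0.5541 := by
  have hegt : (2.7182818:ℝ) < Real.exp 1 := by
    have := Real.exp_one_gt_d9; linarith
  have helt : Real.exp 1 < 2.7182819 := by
    have := Real.exp_one_lt_d9; linarith
  have hepos : (0:ℝ) < Real.exp 1 := Real.exp_pos 1
  constructor
  · -- rewrite the integrand
    simp only [inf_eq]
    set a := Real.log (Real.exp 1 - 1) with ha
    have h2 : (0:ℝ) < Real.exp 1 - 1 := by linarith
    have ha0 : 0 < a := Real.log_pos (by linarith)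
    have ha1 : a < 1 := by
      rw [ha]
      calc Real.log (Real.exp 1 - 1) < Real.log (Real.exp 1) :=
        Real.log_lt_log h2 (by linarith)
      _ = 1 := Real.log_exp 1
    have hexpa : Real.exp a = Real.exp 1 - 1 := Real.exp_log h2
    have hcont : Continuous fun x : ℝ => min (Real.exp (x - 1)) (1 - Real.exp (-1)) :=
      (Real.continuous_exp.comp (continuous_id.sub continuous_const)).min continuous_const
    have hsplit : (∫ x in (0:ℝ)..1, min (Real.exp (x - 1)) (1 - Real.exp (-1)))
        = (∫ x in (0:ℝ)..a, min (Real.exp (x - 1)) (1 - Real.exp (-1)))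
          + ∫ x in a..1, min (Real.exp (x - 1)) (1 - Real.exp (-1)) :=
      (intervalIntegral.integral_add_adjacent_intervals
        (hcont.intervalIntegrable _ _) (hcont.intervalIntegrable _ _)).symm
    have hkey : ∀ x : ℝ, x ≤ a → min (Real.exp (x - 1)) (1 - Real.exp (-1)) = Real.exp (x - 1) := by
      intro x hx
      rw [min_eq_left]
      have : Real.exp (x - 1) ≤ Real.exp (a - 1) := Real.exp_le_exp.2 (by linarith)
      have h5 : Real.exp (a - 1) = 1 - Real.exp (-1) := by
        rw [Real.exp_sub, hexpa, Real.exp_neg]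
        field_simp
      linarith
    have hkey2 : ∀ x : ℝ, a ≤ x →
        min (Real.exp (x - 1)) (1 - Real.exp (-1)) = 1 - Real.exp (-1) := by
      intro x hx
      rw [min_eq_right]
      have : Real.exp (a - 1) ≤ Real.exp (x - 1) := Real.exp_le_exp.2 (by linarith)
      have h5 : Real.exp (a - 1) = 1 - Real.exp (-1) := by
        rw [Real.exp_sub, hexpa, Real.exp_neg]
        field_simp
      linarith
    have hI1 : (∫ x in (0:ℝ)..a, min (Real.exp (x - 1)) (1 - Real.exp (-1)))
        = Real.exp (a - 1) - Real.exp (-1) := by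
      rw [intervalIntegral.integral_congr (g := fun x => Real.exp (x - 1))
        (fun x hx => by
          rw [Set.uIcc_of_le (le_of_lt ha0)] at hx
          exact hkey x hx.2)]
      exact exp_sub_one_int a
    have hI2 : (∫ x in a..1, min (Real.exp (x - 1)) (1 - Real.exp (-1)))
        = (1 - a) * (1 - Real.exp (-1)) := by
      rw [intervalIntegral.integral_congr (g := fun _ => 1 - Real.exp (-1))
        (fun x hx => by
          rw [Set.uIcc_of_le (le_of_lt ha1)] at hx
          exact hkey2 x hx.1)]
      simp only [intervalIntegral.integral_const, smul_eq_mul]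
    rw [hsplit, hI1, hI2]
    have h5 : Real.exp (a - 1) = 1 - Real.exp (-1) := by
      rw [Real.exp_sub, hexpa, Real.exp_neg]
      field_simp
    rw [Real.exp_neg] at h5 ⊢
    rw [ge_iff_le]
    have : (Real.exp 1 - 2) / Real.exp 1 = Real.exp (a-1) - (Real.exp 1)⁻¹ := by
      rw [h5]; field_simp; ring
    rw [this, one_div]
  · have hL : Real.log (Real.exp 1 - 1) ≤ 0.5414 := log_bound
    have h1 : (Real.exp 1 - 2) / Real.exp 1 = 1 - 2 / Real.exp 1 := by field_simp
    rw [h1]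
    have h2 : 2 / Real.exp 1 < 2 / 2.7182818 := by
      apply div_lt_div_of_pos_left <;> norm_num <;> linarith
    have h3 : 1 / Real.exp 1 < 1 / 2.7182818 := by
      apply div_lt_div_of_pos_left <;> norm_num <;> linarith
    nlinarith [Real.log_nonneg (show (1:ℝ) ≤ Real.exp 1 - 1 by linarith)]
end

section
/- Suppose real sequences θ_0 ≥ θ_1 ≥ ... ≥ θ_{m+1} = 0 with θ_0 = θ, and θ = τ_0 ≤ τ_1 ≤ ... ≤ τ_{m+1} = 1, a constant 0 < θ ≤ θ_0, nonnegative nondecreasing functions g, h on [0,1) with h(y)/y non-increasing, and φ(y) = 1 - g(y) - h(y) non-increasing. Then min{(1-θ)·φ(1⁻), Σ_{i=0}^m (τ_i - θ)·h(θ_i)} + Σ_{i=0}^m (θ_i - θ_{i+1})·min{G, φ(τ_i)} ≥ min over i of [min{(1-θ)·φ(1⁻), (τ_i - θ)·h(θ)} + θ·min{G, φ(τ_i)}], for any constant G ≥ 0. -/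
open Filter

theorem stmt_4 (m : ℕ) (θseq τseq : ℕ → ℝ) (θ G φ1 : ℝ)
    (g h : ℝ → ℝ)
    (hθ0 : θseq 0 = θ) (hθlast : θseq (m + 1) = 0)
    (hθmono : ∀ i ≤ m, θseq (i + 1) ≤ θseq i)
    (hτ0 : τseq 0 = θ) (hτlast : τseq (m + 1) = 1)
    (hτmono : ∀ i ≤ m, τseq i ≤ τseq (i + 1))
    (hθpos : 0 < θ)
    (hgnn : ∀ y ∈ Set.Ico (0:ℝ) 1, 0 ≤ g y)
    (hhnn : ∀ y ∈ Set.Ico (0:ℝ) 1, 0 ≤ h y)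
    (hgmono : ∀ x ∈ Set.Ico (0:ℝ) 1, ∀ y ∈ Set.Ico (0:ℝ) 1, x ≤ y → g x ≤ g y)
    (hhmono : ∀ x ∈ Set.Ico (0:ℝ) 1, ∀ y ∈ Set.Ico (0:ℝ) 1, x ≤ y → h x ≤ h y)
    (hhdiv : ∀ x ∈ Set.Ioo (0:ℝ) 1, ∀ y ∈ Set.Ioo (0:ℝ) 1, x ≤ y → h y / y ≤ h x / x)
    (hφ : ∀ x ∈ Set.Ico (0:ℝ) 1, ∀ y ∈ Set.Ico (0:ℝ) 1, x ≤ y →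
      1 - g y - h y ≤ 1 - g x - h x)
    (hφ1 : Tendsto (fun y => 1 - g y - h y) (nhdsWithin 1 (Set.Iio 1)) (nhds φ1))
    (hG : 0 ≤ G) :
    min ((1 - θ) * φ1) (∑ i ∈ Finset.range (m + 1), (τseq i - θ) * h (θseq i))
      + ∑ i ∈ Finset.range (m + 1),
          (θseq i - θseq (i + 1)) * min G (1 - g (τseq i) - h (τseq i))
    ≥ (Finset.range (m + 1)).inf' (by simp)
        (fun i => min ((1 - θ) * φ1) ((τseq i - θ) * h θ)
          + θ * min G (1 - g (τseq i) - h (τseq i))) := by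
  -- chains of monotonicity
  have θchain : ∀ i j, i ≤ j → j ≤ m + 1 → θseq j ≤ θseq i := by
    intro i j hij hj
    induction j with
    | zero =>
      have : i = 0 := Nat.le_zero.mp hij
      subst this; exact le_rfl
    | succ k ih =>
      rcases Nat.eq_or_lt_of_le hij with rfl | hlt
      · exact le_rfl
      · have hk : i ≤ k := Nat.lt_succ_iff.mp hlt
        exact (hθmono k (Nat.succ_le_succ_iff.mp hj)).trans
          (ih hk (Nat.le_of_succ_le hj))
  have τchain : ∀ i j, i ≤ j → j ≤ m + 1 → τseq i ≤ τseq j := by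
    intro i j hij hj
    induction j with
    | zero =>
      have : i = 0 := Nat.le_zero.mp hij
      subst this; exact le_rfl
    | succ k ih =>
      rcases Nat.eq_or_lt_of_le hij with rfl | hlt
      · exact le_rfl
      · have hk : i ≤ k := Nat.lt_succ_iff.mp hlt
        exact (ih hk (Nat.le_of_succ_le hj)).trans
          (hτmono k (Nat.succ_le_succ_iff.mp hj))
  have hθle1 : θ ≤ 1 := by
    rw [← hτ0, ← hτlast]; exact τchain 0 (m + 1) (Nat.zero_le _) le_rfl
  have hθnn : ∀ i ≤ m + 1, 0 ≤ θseq i := by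
    intro i hi
    have := θchain i (m + 1) hi le_rfl
    rw [hθlast] at this; exact this
  have hθub : ∀ i ≤ m + 1, θseq i ≤ θ := by
    intro i hi
    have := θchain 0 i (Nat.zero_le _) hi
    rw [hθ0] at this; exact this
  have hτlb : ∀ i ≤ m + 1, θ ≤ τseq i := by
    intro i hi
    have := τchain 0 i (Nat.zero_le _) hi
    rw [hτ0] at this; exact this
  have hτub : ∀ i ≤ m + 1, τseq i ≤ 1 := by
    intro i hi
    have := τchain i (m + 1) hi le_rfl
    rw [hτlast] at this; exact this
  set c : ℕ → ℝ := fun i => min G (1 - g (τseq i) - h (τseq i)) with hc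
  set a : ℕ → ℝ := fun i => θseq i - θseq (i + 1) with ha
  have ha_nn : ∀ i ∈ Finset.range (m + 1), 0 ≤ a i := by
    intro i hi
    have him : i ≤ m := Nat.lt_succ_iff.mp (Finset.mem_range.mp hi)
    simp only [ha, sub_nonneg]
    exact hθmono i him
  have ha_le : ∀ i ∈ Finset.range (m + 1), a i ≤ θseq i := by
    intro i hi
    have him : i ≤ m := Nat.lt_succ_iff.mp (Finset.mem_range.mp hi)
    have := hθnn (i + 1) (Nat.succ_le_succ him)
    simp only [ha]; linarith
  have ha_sum : ∑ i ∈ Finset.range (m + 1), a i = θ := by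
    simp only [ha]
    rw [Finset.sum_range_sub' θseq]
    rw [hθ0, hθlast]; ring
  set A := (1 - θ) * φ1 with hA
  -- general: for any j in range, inf' ≤ term j
  have hinf_le : ∀ j ∈ Finset.range (m + 1),
      (Finset.range (m + 1)).inf' (by simp)
        (fun i => min A ((τseq i - θ) * h θ) + θ * c i)
      ≤ min A ((τseq j - θ) * h θ) + θ * c j := by
    intro j hj
    exact Finset.inf'_le _ hj
  rcases le_or_gt A (∑ i ∈ Finset.range (m + 1), (τseq i - θ) * h (θseq i)) with hcase | hcase
  · -- Case A : min = A; pick j minimizing c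
    obtain ⟨j, hjmem, hjmin⟩ :=
      Finset.exists_min_image (Finset.range (m + 1)) c ⟨0, by simp⟩
    have hsum_ge : θ * c j ≤ ∑ i ∈ Finset.range (m + 1), a i * c i := by
      calc θ * c j = ∑ i ∈ Finset.range (m + 1), a i * c j := by
            rw [← Finset.sum_mul, ha_sum]
        _ ≤ ∑ i ∈ Finset.range (m + 1), a i * c i := by
            apply Finset.sum_le_sum
            intro i hi
            exact mul_le_mul_of_nonneg_left (hjmin i hi) (ha_nn i hi)
    have h1 : min A (∑ i ∈ Finset.range (m + 1), (τseq i - θ) * h (θseq i)) = A :=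
      min_eq_left hcase
    calc (Finset.range (m + 1)).inf' (by simp)
          (fun i => min A ((τseq i - θ) * h θ) + θ * c i)
        ≤ min A ((τseq j - θ) * h θ) + θ * c j := hinf_le j hjmem
      _ ≤ A + θ * c j := by
          have := min_le_left A ((τseq j - θ) * h θ); linarith
      _ ≤ min A (∑ i ∈ Finset.range (m + 1), (τseq i - θ) * h (θseq i))
            + ∑ i ∈ Finset.range (m + 1), a i * c i := by
          rw [h1]; linarith
  · -- Case B : min = the sum
    have h1 : min A (∑ i ∈ Finset.range (m + 1), (τseq i - θ) * h (θseq i))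
        = ∑ i ∈ Finset.range (m + 1), (τseq i - θ) * h (θseq i) :=
      min_eq_right hcase.le
    -- per-term key inequality
    have key : ∀ i ∈ Finset.range (m + 1),
        a i * ((τseq i - θ) * h θ / θ) ≤ (τseq i - θ) * h (θseq i) := by
      intro i hi
      have him : i ≤ m := Nat.lt_succ_iff.mp (Finset.mem_range.mp hi)
      have him1 : i ≤ m + 1 := Nat.le_succ_of_le him
      have hτi : 0 ≤ τseq i - θ := by have := hτlb i him1; linarith
      rcases eq_or_lt_of_le hθle1 with hθ1 | hθ1
      · -- θ = 1 : then τseq i = 1 = θ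
        have hτ1 : τseq i = 1 := le_antisymm (hτub i him1) (by rw [← hθ1]; exact hτlb i him1)
        have : τseq i - θ = 0 := by rw [hτ1, ← hθ1]; ring
        rw [this]; simp
      · -- θ < 1
        have hhθ : 0 ≤ h θ := hhnn θ ⟨hθpos.le, hθ1⟩
        rcases eq_or_lt_of_le (hθnn i him1) with hθi0 | hθi0
        · -- θseq i = 0, hence a i = 0
          have hai0 : a i = 0 := le_antisymm (by have := ha_le i hi; rw [← hθi0] at this; exact this)
            (ha_nn i hi)
          rw [hai0]
          simp only [zero_mul]
          exact mul_nonneg hτi (hhnn (θseq i) ⟨(hθnn i him1), by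
            have := hθub i him1; linarith⟩)
        · -- θseq i > 0
          have hθiub : θseq i ≤ θ := hθub i him1
          have hdiv := hhdiv (θseq i) ⟨hθi0, by linarith⟩ θ ⟨hθpos, hθ1⟩ hθiub
          -- h θ / θ ≤ h (θseq i) / θseq i
          have h2 : θseq i * (h θ / θ) ≤ h (θseq i) := by
            rw [div_le_div_iff₀ hθpos hθi0] at hdiv
            rw [mul_comm, div_mul_eq_mul_div, div_le_iff₀ hθpos] at *
            nlinarith
          have h3 : a i * (h θ / θ) ≤ h (θseq i) := by
            have hq : 0 ≤ h θ / θ := div_nonneg hhθ hθpos.le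
            exact (mul_le_mul_of_nonneg_right (ha_le i hi) hq).trans h2
          calc a i * ((τseq i - θ) * h θ / θ) = (τseq i - θ) * (a i * (h θ / θ)) := by ring
            _ ≤ (τseq i - θ) * h (θseq i) := mul_le_mul_of_nonneg_left h3 hτi
    -- pick j minimizing e i := (τseq i - θ) * h θ / θ + c i
    set e : ℕ → ℝ := fun i => (τseq i - θ) * h θ / θ + c i with he
    obtain ⟨j, hjmem, hjmin⟩ :=
      Finset.exists_min_image (Finset.range (m + 1)) e ⟨0, by simp⟩
    have hsum_ge : θ * e j ≤ ∑ i ∈ Finset.range (m + 1), a i * e i := by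
      calc θ * e j = ∑ i ∈ Finset.range (m + 1), a i * e j := by
            rw [← Finset.sum_mul, ha_sum]
        _ ≤ ∑ i ∈ Finset.range (m + 1), a i * e i := by
            apply Finset.sum_le_sum
            intro i hi
            exact mul_le_mul_of_nonneg_left (hjmin i hi) (ha_nn i hi)
    have hsplit : ∑ i ∈ Finset.range (m + 1), a i * e i
        ≤ ∑ i ∈ Finset.range (m + 1), (τseq i - θ) * h (θseq i)
          + ∑ i ∈ Finset.range (m + 1), a i * c i := by
      rw [← Finset.sum_add_distrib]
      apply Finset.sum_le_sum
      intro i hi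
      have := key i hi
      simp only [he]
      have expand : a i * ((τseq i - θ) * h θ / θ + c i)
          = a i * ((τseq i - θ) * h θ / θ) + a i * c i := by ring
      rw [expand]; linarith
    have hej : θ * e j = (τseq j - θ) * h θ + θ * c j := by
      simp only [he]
      field_simp
    calc (Finset.range (m + 1)).inf' (by simp)
          (fun i => min A ((τseq i - θ) * h θ) + θ * c i)
        ≤ min A ((τseq j - θ) * h θ) + θ * c j := hinf_le j hjmem
      _ ≤ (τseq j - θ) * h θ + θ * c j := by
          have := min_le_right A ((τseq j - θ) * h θ); linarith
      _ = θ * e j := hej.symm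
      _ ≤ ∑ i ∈ Finset.range (m + 1), (τseq i - θ) * h (θseq i)
            + ∑ i ∈ Finset.range (m + 1), a i * c i :=
          hsum_ge.trans hsplit
      _ = min A (∑ i ∈ Finset.range (m + 1), (τseq i - θ) * h (θseq i))
            + ∑ i ∈ Finset.range (m + 1), a i * c i := by rw [h1]
end
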